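/- arXiv:2302.13171 — 4 statements merged into one kernel-verified Lean document; each statement's English description precedes it below -/
import Mathlib

section
/- If κ > δ are regular cardinals and there exists a κ-Suslin tree with a δ-ascent path, then there is no δ⁺-complete uniform ultrafilter over κ. -/
universe u

/-- An abstract tree: a strict order in which the set of predecessors of any node
is linearly ordered, together with a height (level) function. -/
structure PTree : Type (u + 1) where
  Node : Type u
  lt : Node → Node → Prop
  lt_trans : ∀ {a b c : Node}, lt a b → lt b c → lt a c
  ht : Node → Ordinal.{u}
  lt_ht : ∀ {a b : Node}, lt a b → ht a < ht b
  below_linear : ∀ {a b c : Node}, lt a c → lt b c → lt a b ∨ a = b ∨ lt b a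

/-- `T` has height `κ`: all nodes live on levels `< κ` and every level `< κ` is nonempty. -/
def PTree.HeightIs (T : PTree.{u}) (κ : Ordinal.{u}) : Prop :=
  (∀ x : T.Node, T.ht x < κ) ∧ ∀ α < κ, ∃ x : T.Node, T.ht x = α

def PTree.IsAntichainIn (T : PTree.{u}) (A : Set T.Node) : Prop :=
  ∀ a ∈ A, ∀ b ∈ A, a ≠ b → ¬ T.lt a b ∧ ¬ T.lt b a

def PTree.IsChainIn (T : PTree.{u}) (C : Set T.Node) : Prop :=
  ∀ a ∈ C, ∀ b ∈ C, a = b ∨ T.lt a b ∨ T.lt b a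

/-- `T` is a `κ`-Suslin tree: it has height `κ` and every antichain and every chain
has size `< κ`. -/
def PTree.IsSuslin (T : PTree.{u}) (κ : Cardinal.{u}) : Prop :=
  T.HeightIs κ.ord ∧ (∀ A : Set T.Node, T.IsAntichainIn A → Cardinal.mk A < κ) ∧
    ∀ C : Set T.Node, T.IsChainIn C → Cardinal.mk C < κ

/-- `f` is a `δ`-ascent path through the tree `T` of height `κ`:
`f α : δ → Lev_α(T)` and for `α < β < κ` the set of `υ < δ` with
`f α υ <_T f β υ` is co-bounded in `δ`. -/
def PTree.AscentPath (T : PTree.{u}) (κ δ : Ordinal.{u})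
    (f : Ordinal.{u} → Ordinal.{u} → T.Node) : Prop :=
  (∀ α < κ, ∀ υ < δ, T.ht (f α υ) = α) ∧
    ∀ α β : Ordinal.{u}, α < β → β < κ →
      ∃ θ < δ, ∀ υ : Ordinal.{u}, θ ≤ υ → υ < δ → T.lt (f α υ) (f β υ)

/-- `U` is `δ`-complete: it is closed under intersections of fewer than `δ` many sets. -/
def UFComplete {α : Type u} (δ : Cardinal.{u}) (U : Ultrafilter α) : Prop :=
  ∀ s : Set (Set α), Cardinal.mk s < δ → (∀ t ∈ s, t ∈ U) → ⋂₀ s ∈ U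

/-- `U` is uniform: every member of `U` has full cardinality. -/
def UFUniform {α : Type u} (U : Ultrafilter α) : Prop :=
  ∀ A ∈ U, Cardinal.mk A = Cardinal.mk α

noncomputable def tin (o : Ordinal.{u}) (x : o.ToType) : Ordinal.{u} :=
  @Ordinal.typein o.ToType (· < ·) isWellOrder_lt x

theorem tin_lt_self (o : Ordinal.{u}) (x : o.ToType) : tin o x < o :=
  Ordinal.typein_lt_self x

theorem tin_lt_tin (o : Ordinal.{u}) {x y : o.ToType} : tin o x < tin o y ↔ x < y :=
  @Ordinal.typein_lt_typein o.ToType (· < ·) isWellOrder_lt x y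

theorem tin_inj (o : Ordinal.{u}) : Function.Injective (tin o) :=
  @Ordinal.typein_injective o.ToType (· < ·) isWellOrder_lt

theorem tin_surj (o : Ordinal.{u}) {θ : Ordinal.{u}} (h : θ < o) : ∃ x, tin o x = θ := by
  have := @Ordinal.typein_surj o.ToType (· < ·) isWellOrder_lt θ (by rwa [Ordinal.type_toType])
  obtain ⟨x, hx⟩ := this
  exact ⟨x, hx⟩

/-- If `κ > δ` are regular cardinals and there exists a `κ`-Suslin tree with a
`δ`-ascent path, then there is no `δ⁺`-complete uniform ultrafilter over `κ`. -/
theorem no_uniform_succ_complete_ultrafilter_of_suslin_ascent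
    (κ δ : Cardinal.{u}) (hδκ : δ < κ) (hκ : κ.IsRegular) (hδ : δ.IsRegular)
    (htree : ∃ (T : PTree.{u}) (f : Ordinal.{u} → Ordinal.{u} → T.Node),
      T.IsSuslin κ ∧ T.AscentPath κ.ord δ.ord f)
    (α : Type u) (hα : Cardinal.mk α = κ) (U : Ultrafilter α) :
    ¬ (UFComplete (Order.succ δ) U ∧ UFUniform U) := by
  classical
  rintro ⟨hcomp, hunif⟩
  obtain ⟨T, f, hSus, hPath⟩ := htree
  -- notation
  set D := δ.ord.ToType with hDdef
  have hD : Cardinal.mk D = δ := by rw [Cardinal.mk_toType, Cardinal.card_ord]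
  have hDne : Nonempty D := by
    rw [Ordinal.toType_nonempty_iff_ne_zero]
    intro h0
    have h1 : (0 : Cardinal) < δ := lt_of_lt_of_le Cardinal.aleph0_pos hδ.1
    have h2 : δ.ord ≠ 0 := by
      intro hz
      have := Cardinal.card_ord δ
      rw [hz, Ordinal.card_zero] at this
      exact h1.ne this
    exact h2 h0
  -- members of U are not small
  have notsmall : ∀ A : Set α, Cardinal.mk A < κ → A ∉ U := by
    intro A hA hAU
    have := (hunif A hAU).trans hα
    exact absurd (this ▸ hA) (lt_irrefl κ)
  -- constancy: any D-valued function is constant on a set in U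
  have const : ∀ h : α → D, ∃ u : D, {x | h x = u} ∈ U := by
    intro h
    by_contra hc
    push_neg at hc
    have hmem : ∀ u : D, {x | h x = u}ᶜ ∈ U := fun u =>
      Ultrafilter.compl_mem_iff_notMem.mpr (hc u)
    have hlt : Cardinal.mk (Set.range fun u : D => {x | h x = u}ᶜ) < Order.succ δ :=
      lt_of_le_of_lt (Cardinal.mk_range_le.trans hD.le) (Order.lt_succ δ)
    have hint := hcomp _ hlt (by rintro t ⟨u, rfl⟩; exact hmem u)
    have hempty : ⋂₀ (Set.range fun u : D => {x | h x = u}ᶜ) = (∅ : Set α) := by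
      ext x
      simp only [Set.mem_empty_iff_false, iff_false]
      intro hx
      have := Set.mem_sInter.mp hx _ ⟨h x, rfl⟩
      exact this rfl
    rw [hempty] at hint
    exact (Ultrafilter.neBot U).ne (Filter.empty_mem_iff_bot.mp hint)
  -- the embedding of α into the ordinals below κ.ord
  obtain ⟨e⟩ : Nonempty (α ≃ κ.ord.ToType) := by
    rw [← Cardinal.eq, Cardinal.mk_toType, Cardinal.card_ord, hα]
  set ι : α → Ordinal.{u} := fun x => tin κ.ord (e x) with hιdef
  have hιlt : ∀ x : α, ι x < κ.ord := fun x => tin_lt_self κ.ord (e x)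
  have hιmono : ∀ x y : α, e x < e y → ι x < ι y := fun x y h =>
    (tin_lt_tin κ.ord).mpr h
  have hιinj : Function.Injective ι := fun x y h =>
    e.injective (tin_inj κ.ord h)
  -- tails are in U
  have htail : ∀ x : α, {y : α | e x < e y} ∈ U := by
    intro x
    have hsm : Cardinal.mk {y : α | ¬ e x < e y} < κ := by
      have hinj : Function.Injective
          (fun y : {y : α | ¬ e x < e y} => (⟨e y.1, by simpa using y.2⟩ : Set.Iic (e x))) := by
        intro a b hab
        exact Subtype.ext (e.injective (congrArg Subtype.val hab))
      refine lt_of_le_of_lt (Cardinal.mk_le_of_injective hinj) ?_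
      have : Set.Iic (e x) = insert (e x) (Set.Iio (e x)) := by
        ext z; simp [le_iff_lt_or_eq, or_comm]
      rw [this]
      refine lt_of_le_of_lt (Cardinal.mk_insert_le) ?_
      have h1 : Cardinal.mk (Set.Iio (e x)) < κ := Cardinal.mk_Iio_ord_toType (e x)
      exact Cardinal.add_lt_of_lt hκ.aleph0_le h1 (lt_of_lt_of_le Cardinal.one_lt_aleph0 hκ.1)
    have := notsmall _ hsm
    have hcm : {y : α | ¬ e x < e y} = {y : α | e x < e y}ᶜ := by ext y; simp
    rw [hcm] at this
    exact (Ultrafilter.compl_notMem_iff).mp this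
  -- choice of threshold indices
  have hchoice : ∀ x y : α, ∃ u : D, e x < e y →
      ∀ υ : Ordinal.{u}, tin δ.ord u ≤ υ → υ < δ.ord →
        T.lt (f (ι x) υ) (f (ι y) υ) := by
    intro x y
    by_cases hxy : e x < e y
    · obtain ⟨θ, hθδ, hθ⟩ := hPath.2 (ι x) (ι y) (hιmono x y hxy) (hιlt y)
      obtain ⟨u, hu⟩ := tin_surj δ.ord hθδ
      exact ⟨u, fun _ υ h1 h2 => hθ υ (by rwa [hu] at h1) h2⟩
    · exact ⟨Classical.arbitrary D, fun h => absurd h hxy⟩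
  choose g hg using hchoice
  choose w hw using fun x : α => const (g x)
  obtain ⟨u0, hu0⟩ := const w
  set θstar : Ordinal.{u} := tin δ.ord u0 with hθstar
  have hθδ : θstar < δ.ord := tin_lt_self δ.ord u0
  -- the chain
  set S : Set α := {x | w x = u0} with hSdef
  set C : Set T.Node := (fun x => f (ι x) θstar) '' S with hCdef
  -- any two nodes of C are below a common node
  have key : ∀ x ∈ S, ∀ x' ∈ S,
      T.lt (f (ι x) θstar) (f (ι x') θstar) ∨ f (ι x) θstar = f (ι x') θstar ∨
        T.lt (f (ι x') θstar) (f (ι x) θstar) := by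
    intro x hx x' hx'
    have hW : {y | g x y = w x} ∩ {y | g x' y = w x'} ∩ ({y | e x < e y} ∩ {y | e x' < e y}) ∈ U :=
      Filter.inter_mem (Filter.inter_mem (hw x) (hw x'))
        (Filter.inter_mem (htail x) (htail x'))
    obtain ⟨y, ⟨⟨hy1, hy2⟩, hy3, hy4⟩⟩ := (Ultrafilter.neBot U).nonempty_of_mem hW
    have h1 : T.lt (f (ι x) θstar) (f (ι y) θstar) := by
      have := hg x y hy3 θstar ?_ hθδ
      · exact this
      · rw [hy1, hx]
    have h2 : T.lt (f (ι x') θstar) (f (ι y) θstar) := by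
      have := hg x' y hy4 θstar ?_ hθδ
      · exact this
      · rw [hy2, hx']
    exact T.below_linear h1 h2
  have hchain : T.IsChainIn C := by
    rintro a ⟨x, hx, rfl⟩ b ⟨x', hx', rfl⟩
    rcases key x hx x' hx' with h | h | h
    · exact Or.inr (Or.inl h)
    · exact Or.inl h
    · exact Or.inr (Or.inr h)
  -- C has size κ, contradicting Suslinity
  have hCsize : Cardinal.mk C = κ := by
    have hinj : Set.InjOn (fun x => f (ι x) θstar) S := by
      intro x _ x' _ hxx'
      have hx1 : T.ht (f (ι x) θstar) = ι x := hPath.1 (ι x) (hιlt x) θstar hθδ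
      have hx2 : T.ht (f (ι x') θstar) = ι x' := hPath.1 (ι x') (hιlt x') θstar hθδ
      have hxx2 : f (ι x) θstar = f (ι x') θstar := hxx'
      exact hιinj (by rw [← hx1, ← hx2, hxx2])
    rw [hCdef]
    exact (Cardinal.mk_image_eq_of_injOn _ _ hinj).trans ((hunif S hu0).trans hα)
  have := hSus.2.2 C hchain
  rw [hCsize] at this
  exact lt_irrefl κ this
end

section
/- If κ > δ are regular cardinals and there exists a κ-Suslin tree with a δ-ascent path, then κ is not δ⁺-strongly compact. -/
universe u

/-- There is a `δ`-complete fine ultrafilter on `P_κ(θ)`; this is the ultrafilter form of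
`(δ, θ)`-strong compactness of `κ` (an elementary `j : V → M` with `crit j ≥ δ` and a cover
`D ∈ M` of `j '' θ` with `|D| < j κ` in `M`). -/
def DeltaThetaCompact (δ κ θ : Cardinal.{u}) : Prop :=
  ∃ U : Ultrafilter {s : Set θ.out // Cardinal.mk s < κ},
    UFComplete δ U ∧ ∀ x : θ.out, {s : {s : Set θ.out // Cardinal.mk s < κ} | x ∈ s.1} ∈ U

/-- `κ` is `δ`-strongly compact: it is `(δ, θ)`-strongly compact for every `θ ≥ κ`. -/
def IsDeltaStronglyCompact (δ κ : Cardinal.{u}) : Prop :=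
  ∀ θ : Cardinal.{u}, κ ≤ θ → DeltaThetaCompact δ κ θ

/-! Push a `δ⁺`-complete fine ultrafilter on `P_κ(κ)` forward along `s ↦ sup s` to get
ultrafilter-many `β < κ` above any given `α < κ`. For such `β` the ascent path gives
`f α υ <_T f β υ` for all `υ` above a threshold `< δ`, and `δ⁺`-completeness fixes one threshold
`θ_α` that works for almost all `β`. Since `δ < κ = cf κ`, a single `θ` equals `θ_α` for `κ` many
`α`, and any two of the nodes `f α θ` then lie below a common `f β θ`: they form a chain of
size `κ`, which a `κ`-Suslin tree does not have. -/

open Cardinal Filter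

theorem UFComplete.exists_eventually_of_eventually_exists {X : Type u} {α : Type v}
    {δ : Cardinal.{u}} {U : Ultrafilter X} (hU : UFComplete (Order.succ δ) U) {S : Set α}
    (hS : lift.{u} #S ≤ lift.{v} δ) {P : X → α → Prop} (h : ∀ᶠ x in U, ∃ a ∈ S, P x a) :
    ∃ a ∈ S, ∀ᶠ x in U, P x a := by
  by_contra! hne
  have hall : ∀ᶠ x in U, ∀ a ∈ S, ¬ P x a := by
    have hcard : #((fun a => {x | ¬ P x a}) '' S) < Order.succ δ := by
      refine Order.lt_succ_of_le (lift_le.{v}.mp (mk_image_le_lift.trans ?_))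
      simpa using hS
    filter_upwards [hU _ hcard (by
      rintro _ ⟨a, ha, rfl⟩
      exact hne a ha)] with x hx a ha
    exact hx _ ⟨a, ha, rfl⟩
  obtain ⟨x, ⟨a, ha, hPa⟩, hx⟩ := (h.and hall).exists
  exact hx a ha hPa

theorem PTree.isChainIn_of_exists_upper (T : PTree.{u}) {C : Set T.Node}
    (h : ∀ a ∈ C, ∀ b ∈ C, ∃ c, T.lt a c ∧ T.lt b c) : T.IsChainIn C := by
  intro a ha b hb
  obtain ⟨c, hac, hbc⟩ := h a ha b hb
  rcases T.below_linear hac hbc with hab | rfl | hba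
  exacts [Or.inr (Or.inl hab), Or.inl rfl, Or.inr (Or.inr hba)]

theorem Cardinal.IsRegular.exists_subset_Iio_ord_forall_eq {κ δ : Cardinal.{u}} (hκ : κ.IsRegular)
    (hδκ : δ < κ) (g : Ordinal.{u} → Ordinal.{u}) (hg : ∀ α < κ.ord, g α < δ.ord) :
    ∃ υ < δ.ord, ∃ A ⊆ Set.Iio κ.ord, Cardinal.lift.{u + 1} κ ≤ #A ∧ ∀ α ∈ A, g α = υ := by
  obtain ⟨⟨υ, hυ⟩, A, hA, hκA, hgA⟩ := infinite_pigeonhole_set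
    (fun α : Set.Iio κ.ord => (⟨g α, hg α α.2⟩ : Set.Iio δ.ord)) (Cardinal.lift.{u + 1} κ)
    (by simp [mk_Iio_ordinal]) (by simpa using hκ.aleph0_le)
    (by rw [mk_Iio_ordinal, card_ord, hκ.lift.cof_ord]; exact lift_lt.mpr hδκ)
  exact ⟨υ, hυ, A, hA, hκA, fun α hα => congrArg Subtype.val (hgA hα)⟩

theorem PTree.AscentPath.exists_chain_of_ultrafilter {T : PTree.{u}} {κ δ : Cardinal.{u}}
    {f : Ordinal.{u} → Ordinal.{u} → T.Node} (hf : T.AscentPath κ.ord δ.ord f)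
    (hκ : κ.IsRegular) (hδκ : δ < κ) {X : Type u} {U : Ultrafilter X}
    (hU : UFComplete (Order.succ δ) U) {b : X → Ordinal.{u}}
    (hb : ∀ α < κ.ord, ∀ᶠ x in U, α < b x ∧ b x < κ.ord) :
    ∃ C : Set T.Node, T.IsChainIn C ∧ κ ≤ #C := by
  have hthreshold : ∀ α < κ.ord, ∃ θ < δ.ord,
      ∀ᶠ x in U, ∀ υ, θ ≤ υ → υ < δ.ord → T.lt (f α υ) (f (b x) υ) := by
    intro α hα
    refine hU.exists_eventually_of_eventually_exists (S := Set.Iio δ.ord)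
      (by simp [mk_Iio_ordinal]) ?_
    filter_upwards [hb α hα] with x ⟨hαb, hbκ⟩
    exact hf.2 α (b x) hαb hbκ
  choose! Θ hΘδ hΘ using hthreshold
  obtain ⟨υ, hυδ, A, hAκ, hκA, hΘA⟩ := hκ.exists_subset_Iio_ord_forall_eq hδκ Θ hΘδ
  have hinj : Set.InjOn (fun α => f α υ) A := fun α hα α' hα' h => by
    rw [← hf.1 α (hAκ hα) υ hυδ, ← hf.1 α' (hAκ hα') υ hυδ]
    exact congrArg T.ht h
  refine ⟨(fun α => f α υ) '' A, T.isChainIn_of_exists_upper ?_, ?_⟩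
  · rintro _ ⟨α, hα, rfl⟩ _ ⟨α', hα', rfl⟩
    obtain ⟨x, hx, hx'⟩ := ((hΘ α (hAκ hα)).and (hΘ α' (hAκ hα'))).exists
    exact ⟨f (b x) υ, hx υ (hΘA α hα).le hυδ, hx' υ (hΘA α' hα').le hυδ⟩
  · rw [← Cardinal.lift_le.{u + 1}, mk_image_eq_of_injOn_lift _ _ hinj]
    rwa [lift_id'.{u, u + 1}]

theorem DeltaThetaCompact.exists_ultrafilter_cofinal {δ κ : Cardinal.{u}}
    (h : DeltaThetaCompact δ κ κ) (hκ : κ.IsRegular) :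
    ∃ (X : Type u) (U : Ultrafilter X) (b : X → Ordinal.{u}),
      UFComplete δ U ∧ ∀ α < κ.ord, ∀ᶠ x in U, α < b x ∧ b x < κ.ord := by
  obtain ⟨U, hU, hfine⟩ := h
  obtain ⟨e⟩ : Nonempty (κ.out ≃ Set.Iio κ.ord) := lift_mk_eq'.mp (by simp [mk_Iio_ordinal])
  refine ⟨_, U, fun s => ⨆ x : s.1, Order.succ (e x : Ordinal), hU, fun α hα => ?_⟩
  filter_upwards [hfine (e.symm ⟨α, hα⟩)] with s hs
  constructor
  · have hle := Ordinal.le_iSup (fun x : s.1 => Order.succ (e x : Ordinal)) ⟨_, hs⟩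
    rw [e.apply_symm_apply] at hle
    exact (Order.lt_succ α).trans_le hle
  · refine Ordinal.iSup_lt_of_lt_cof (by rw [hκ.cof_ord]; exact s.2) fun x => ?_
    exact (isSuccLimit_ord hκ.aleph0_le).succ_lt (e x).2

theorem not_succ_strongly_compact_of_suslin_ascent_general
    (κ δ : Cardinal.{u}) (hδκ : δ < κ) (hκ : κ.IsRegular)
    (htree : ∃ (T : PTree.{u}) (f : Ordinal.{u} → Ordinal.{u} → T.Node),
      T.IsSuslin κ ∧ T.AscentPath κ.ord δ.ord f) :
    ¬ IsDeltaStronglyCompact (Order.succ δ) κ := by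
  intro hcompact
  obtain ⟨T, f, hT, hf⟩ := htree
  obtain ⟨X, U, b, hU, hb⟩ := (hcompact κ le_rfl).exists_ultrafilter_cofinal hκ
  obtain ⟨C, hC, hκC⟩ := hf.exists_chain_of_ultrafilter hκ hδκ hU hb
  exact (hT.2.2 C hC).not_ge hκC

/-- If `κ > δ` are regular cardinals and there exists a `κ`-Suslin tree with a
`δ`-ascent path, then `κ` is not `δ⁺`-strongly compact. -/
theorem not_succ_strongly_compact_of_suslin_ascent
    (κ δ : Cardinal.{u}) (hδκ : δ < κ) (hκ : κ.IsRegular) (hδ : δ.IsRegular)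
    (htree : ∃ (T : PTree.{u}) (f : Ordinal.{u} → Ordinal.{u} → T.Node),
      T.IsSuslin κ ∧ T.AscentPath κ.ord δ.ord f) :
    ¬ IsDeltaStronglyCompact (Order.succ δ) κ :=
  not_succ_strongly_compact_of_suslin_ascent_general κ δ hδκ hκ htree
end

section
/- Suppose j : V → M is an elementary embedding (e.g., an ultrapower by a δ⁺-complete ultrafilter) with crit(j) > δ and sup(j''κ) < j(κ), where κ > δ are regular. If T is a tree of height κ with a δ-ascent path ⟨f_α : α < κ⟩, then there exist an unbounded set A ⊆ κ and θ < δ such that for all α₂ < α₁ in A and all υ with θ ≤ υ < δ, f_{α₂}(υ) <_T f_{α₁}(υ). -/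
/-!
Let `β = sup j''κ`. Since `β < j(κ)`, the ascent path `j(f)` gives for each `α < κ` a bound
`θ_α < δ` beyond which `j(f)(j α)(υ) < j(f)(β)(υ)`. As `δ < cf κ`, one `θ` equals `θ_α` for
unboundedly many `α`. For two such `α₂ < α₁` and `υ ≥ θ`, the nodes `j(f)(j αᵢ)(υ)` lie below
the common node `j(f)(β)(υ)`, hence are comparable, so the lower one precedes the higher one;
this reflects back to `f α₂ υ <_T f α₁ υ`.
-/

universe u

theorem Ordinal.exists_unbounded_fiber_of_card_lt_cof {κ δ : Ordinal.{u}} (hδκ : δ.card < κ.cof)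
    (P : Ordinal.{u} → Ordinal.{u} → Prop) (hP : ∀ α < κ, ∃ θ < δ, P α θ) :
    ∃ θ < δ, ∀ α < κ, ∃ a, α < a ∧ a < κ ∧ P a θ := by
  by_contra! hne
  choose b hbκ hb using hne
  let bound : δ.ToType → Ordinal.{u} := fun i => b i i.toOrd.2
  have hsup : ⨆ i, bound i + 1 < κ :=
    Ordinal.iSup_add_one_lt_of_lt_cof (by rwa [Cardinal.mk_toType]) fun i => hbκ _ _
  obtain ⟨θ, hθ, hPθ⟩ := hP _ hsup
  have hbθ : b θ hθ + 1 ≤ ⨆ i, bound i + 1 := by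
    convert Ordinal.le_iSup (fun i => bound i + 1) (Ordinal.ToType.mk ⟨θ, hθ⟩)
    simp [bound, Ordinal.ToType.toOrd]
  exact hb θ hθ _ (Order.add_one_le_iff.mp hbθ) hsup hPθ

theorem PTree.lt_of_lt_of_lt_of_ht_lt (T : PTree.{u}) {a b c : T.Node} (hac : T.lt a c)
    (hbc : T.lt b c) (hab : T.ht a < T.ht b) : T.lt a b := by
  rcases T.below_linear hac hbc with h | rfl | h
  · exact h
  · exact absurd hab (lt_irrefl _)
  · exact absurd (T.lt_ht h) hab.not_gt

theorem PTree.AscentPath.lt_of_lt_of_lt {T : PTree.{u}} {κ δ : Ordinal.{u}}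
    {f : Ordinal.{u} → Ordinal.{u} → T.Node} (hf : T.AscentPath κ δ f) {α₂ α₁ υ : Ordinal.{u}}
    (hα : α₂ < α₁) (hα₁ : α₁ < κ) (hυ : υ < δ) {x : T.Node} (h₂ : T.lt (f α₂ υ) x)
    (h₁ : T.lt (f α₁ υ) x) : T.lt (f α₂ υ) (f α₁ υ) := by
  refine T.lt_of_lt_of_lt_of_ht_lt h₂ h₁ ?_
  rwa [hf.1 _ (hα.trans hα₁) _ hυ, hf.1 _ hα₁ _ hυ]

/-- The embedding is modelled as follows: `T'` plays the role of `j(T)`, `f'` of `j(f)`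
(a `δ`-ascent path of the tree `j(T)` of height `j(κ)`, by elementarity), `jN` is the action
of `j` on nodes, and `β = sup (j '' κ)`. -/
theorem ascent_path_coherent_on_unbounded_set_general
    (κ δ : Cardinal.{u}) (hδκ : δ < κ) (hκ : κ.IsRegular)
    (T T' : PTree.{u})
    (f : Ordinal.{u} → Ordinal.{u} → T.Node)
    (j : Ordinal.{u} → Ordinal.{u}) (hj : StrictMono j)
    (f' : Ordinal.{u} → Ordinal.{u} → T'.Node)
    (hf' : T'.AscentPath (j κ.ord) δ.ord f')
    (β : Ordinal.{u}) (hβub : ∀ α < κ.ord, j α < β) (hβlt : β < j κ.ord)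
    (jN : T.Node → T'.Node)
    (hjN : ∀ α < κ.ord, ∀ υ < δ.ord, jN (f α υ) = f' (j α) υ)
    (hreflect : ∀ a b : T.Node, T'.lt (jN a) (jN b) → T.lt a b) :
    ∃ A : Set Ordinal.{u}, (∀ a ∈ A, a < κ.ord) ∧ (∀ α < κ.ord, ∃ a ∈ A, α < a) ∧
      ∃ θ < δ.ord, ∀ α₂ ∈ A, ∀ α₁ ∈ A, α₂ < α₁ →
        ∀ υ : Ordinal.{u}, θ ≤ υ → υ < δ.ord → T.lt (f α₂ υ) (f α₁ υ) := by
  obtain ⟨θ, hθ, hA⟩ := Ordinal.exists_unbounded_fiber_of_card_lt_cof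
    (by rwa [Cardinal.card_ord, hκ.cof_ord])
    (fun α θ => ∀ υ, θ ≤ υ → υ < δ.ord → T'.lt (f' (j α) υ) (f' β υ))
    fun α hα => hf'.2 (j α) β (hβub α hα) hβlt
  refine ⟨{a | a < κ.ord ∧ ∀ υ, θ ≤ υ → υ < δ.ord → T'.lt (f' (j a) υ) (f' β υ)},
    fun a ha => ha.1, fun α hα => ?_, θ, hθ, ?_⟩
  · obtain ⟨a, hαa, haκ, ha⟩ := hA α hα
    exact ⟨a, ⟨haκ, ha⟩, hαa⟩
  · rintro α₂ ⟨hα₂, h₂⟩ α₁ ⟨hα₁, h₁⟩ hα υ hθυ hυ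
    apply hreflect
    rw [hjN α₂ hα₂ υ hυ, hjN α₁ hα₁ υ hυ]
    exact hf'.lt_of_lt_of_lt (hj hα) (hj hα₁) hυ (h₂ υ hθυ hυ) (h₁ υ hθυ hυ)

/-- Abstracting an elementary embedding `j : V → M` (e.g. an ultrapower by a `δ⁺`-complete
ultrafilter) with `crit j > δ` and `sup (j '' κ) < j κ`, where `κ > δ` are regular:
`T'` plays the role of `j(T)`, `f'` of `j(f)` (a `δ`-ascent path of the tree `j(T)` of
height `j(κ)`, by elementarity), `jN` is the action of `j` on nodes, and `β = sup (j '' κ)`.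
Then there are an unbounded `A ⊆ κ` and `θ < δ` such that for all `α₂ < α₁` in `A`
and all `υ` with `θ ≤ υ < δ`, `f α₂ υ <_T f α₁ υ`. -/
theorem ascent_path_coherent_on_unbounded_set
    (κ δ : Cardinal.{u}) (hδκ : δ < κ) (hκ : κ.IsRegular) (hδ : δ.IsRegular)
    (T T' : PTree.{u}) (hT : T.HeightIs κ.ord)
    (f : Ordinal.{u} → Ordinal.{u} → T.Node) (hf : T.AscentPath κ.ord δ.ord f)
    (j : Ordinal.{u} → Ordinal.{u}) (hj : StrictMono j)
    (hcrit : ∀ o : Ordinal.{u}, o ≤ δ.ord → j o = o)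
    (f' : Ordinal.{u} → Ordinal.{u} → T'.Node)
    (hf' : T'.AscentPath (j κ.ord) δ.ord f')
    (β : Ordinal.{u}) (hβub : ∀ α < κ.ord, j α < β) (hβlt : β < j κ.ord)
    (jN : T.Node → T'.Node)
    (hjN : ∀ α < κ.ord, ∀ υ < δ.ord, jN (f α υ) = f' (j α) υ)
    (hreflect : ∀ a b : T.Node, T'.lt (jN a) (jN b) → T.lt a b) :
    ∃ A : Set Ordinal.{u}, (∀ a ∈ A, a < κ.ord) ∧ (∀ α < κ.ord, ∃ a ∈ A, α < a) ∧
      ∃ θ < δ.ord, ∀ α₂ ∈ A, ∀ α₁ ∈ A, α₂ < α₁ →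
        ∀ υ : Ordinal.{u}, θ ≤ υ → υ < δ.ord → T.lt (f α₂ υ) (f α₁ υ) :=
  ascent_path_coherent_on_unbounded_set_general κ δ hδκ hκ T T' f j hj f' hf' β hβub hβlt jN hjN
    hreflect
end

section
/- The poset R₀ of triples ⟨t, f⃗, g⟩, where ⟨t, f⃗⟩ ∈ Q_{κ,δ} and g = ⟨f_{ht(t)-1}, ξ_g⟩ for some ξ_g < δ, ordered by end-extension with coordinatewise tree-extension of g above ξ_g, is <κ-closed. -/
universe u

/-- A node of the binary tree `2^{<κ}`: a binary sequence of some ordinal length. -/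
def BNode : Type (u + 1) :=
  Σ β : Ordinal.{u}, ({x : Ordinal.{u} // x < β} → Bool)

/-- The height (level) of a node is its length. -/
def BNode.ht (s : BNode.{u}) : Ordinal.{u} := s.1

/-- The restriction of a node to a smaller length. -/
def BNode.restrict (t : BNode.{u}) (β : Ordinal.{u}) (h : β ≤ t.1) : BNode.{u} :=
  ⟨β, fun x => t.2 ⟨x.1, lt_of_lt_of_le x.2 h⟩⟩

/-- Tree order on nodes: end extension. -/
def BNode.le (s t : BNode.{u}) : Prop :=
  s.1 ≤ t.1 ∧ ∀ x : {x : Ordinal.{u} // x < s.1}, ∀ hx : x.1 < t.1, s.2 x = t.2 ⟨x.1, hx⟩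

/-- Strict tree order on nodes. -/
def BNode.slt (s t : BNode.{u}) : Prop := BNode.le s t ∧ s.1 < t.1

/-- Replace the initial segment of `t` of length `s₁.1` by `s₁` ("swapping stems"). -/
noncomputable def BNode.swap (s₁ t : BNode.{u}) (h : s₁.1 ≤ t.1) : BNode.{u} :=
  ⟨t.1, fun x => if hx : x.1 < s₁.1 then s₁.2 ⟨x.1, hx⟩ else t.2 x⟩

/-- `C` is club in `κ`: unbounded in `κ` and closed under suprema below `κ`. -/
def IsClubIn (C : Set Ordinal.{u}) (κ : Ordinal.{u}) : Prop :=
  (∀ α < κ, ∃ β ∈ C, α < β ∧ β < κ) ∧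
    ∀ α < κ, (0 : Ordinal.{u}) < α →
      (∀ β < α, ∃ γ ∈ C, β < γ ∧ γ < α) → α ∈ C

/-- `S` is stationary in `κ`: it meets every club subset of `κ`. -/
def IsStationaryIn (S : Set Ordinal.{u}) (κ : Ordinal.{u}) : Prop :=
  ∀ C : Set Ordinal.{u}, IsClubIn C κ → ∃ x, x ∈ S ∧ x ∈ C ∧ x < κ

/-- `κ` is Mahlo: inaccessible, and the regular cardinals below `κ` are stationary. -/
def IsMahlo (κ : Cardinal.{u}) : Prop :=
  κ.IsInaccessible ∧
    IsStationaryIn {o : Ordinal.{u} | o.card.IsRegular ∧ o.card.ord = o} κ.ord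

/-- `κ` is 2-Mahlo: Mahlo, and the Mahlo cardinals below `κ` are stationary. -/
def Is2Mahlo (κ : Cardinal.{u}) : Prop :=
  IsMahlo κ ∧ IsStationaryIn {o : Ordinal.{u} | IsMahlo o.card ∧ o.card.ord = o} κ.ord

/-- A condition of Gitik's forcing `Q_{κ,δ}`: a normal homogeneous subtree of `2^{<κ}`
of successor height `top + 1 < κ`, together with a `δ`-ascent path `f` through it. -/
structure QCond (κ δ : Ordinal.{u}) : Type (u + 1) where
  /-- the top level of the tree; the tree has successor height `top + 1`. -/
  top : Ordinal.{u}
  top_lt : top + 1 < κ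
  /-- the tree. -/
  T : Set BNode.{u}
  mem_ht : ∀ t ∈ T, BNode.ht t < top + 1
  levels_nonempty : ∀ α < top + 1, ∃ t ∈ T, BNode.ht t = α
  downward_closed : ∀ t ∈ T, ∀ β : Ordinal.{u}, ∀ h : β ≤ BNode.ht t,
    BNode.restrict t β h ∈ T
  /-- normality: every node extends to every higher level below the height. -/
  normal : ∀ t ∈ T, ∀ α : Ordinal.{u}, BNode.ht t ≤ α → α < top + 1 →
    ∃ s ∈ T, BNode.ht s = α ∧ BNode.le t s
  /-- homogeneity: the cone above a node is invariant under swapping stems on a level. -/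
  homog : ∀ s₀ ∈ T, ∀ s₁ ∈ T, BNode.ht s₀ = BNode.ht s₁ →
    ∀ t ∈ T, BNode.le s₀ t → ∀ h : BNode.ht s₁ ≤ BNode.ht t, BNode.swap s₁ t h ∈ T
  /-- the `δ`-ascent path. -/
  f : Ordinal.{u} → Ordinal.{u} → BNode.{u}
  f_mem : ∀ α < top + 1, ∀ υ < δ, f α υ ∈ T ∧ BNode.ht (f α υ) = α
  f_ascent : ∀ α β : Ordinal.{u}, α < β → β < top + 1 →
    ∃ ξ < δ, ∀ υ : Ordinal.{u}, ξ ≤ υ → υ < δ → BNode.slt (f α υ) (f β υ)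

/-- The order on `Q_{κ,δ}`: end extension of the tree and of the ascent path. -/
def QLe {κ δ : Ordinal.{u}} (p q : QCond.{u} κ δ) : Prop :=
  q.top ≤ p.top ∧ q.T = {t ∈ p.T | BNode.ht t < q.top + 1} ∧
    ∀ α ≤ q.top, ∀ υ < δ, p.f α υ = q.f α υ

/-- A condition of the dense set `R₀` in `Q_{κ,δ} * Ḟ_{κ,δ}`: a condition `⟨t, f⃗⟩` of
`Q_{κ,δ}` together with `g = ⟨f_{ht(t)-1}, ξ⟩` for some `ξ < δ`, the `F`-part acting at
the top level of the tree. -/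
structure RCond (κ δ : Ordinal.{u}) extends QCond.{u} κ δ : Type (u + 1) where
  /-- the starting point of the `F_{κ,δ}`-condition. -/
  ξ : Ordinal.{u}
  ξ_lt : ξ < δ

/-- The order on `R₀`: extension in `Q_{κ,δ}`, equality of the `ξ`'s, and coordinatewise
tree-extension of the top functions above `ξ`. -/
def RLe {κ δ : Ordinal.{u}} (p q : RCond.{u} κ δ) : Prop :=
  QLe p.toQCond q.toQCond ∧ p.ξ = q.ξ ∧
    ∀ υ : Ordinal.{u}, p.ξ ≤ υ → υ < δ → BNode.le (q.f q.top υ) (p.f p.top υ)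

/-! If the heights of a descending sequence are eventually constant, a late condition is already a
lower bound. Otherwise their supremum `Λ` is below `κ` by regularity, and the union of the trees is
normal and homogeneous of height `Λ`. As all conditions share `ξ`, for each `υ ≥ ξ` the top nodes
`f_top(υ)` form a chain, whose union is a cofinal branch `b_υ`. Sealing the union tree at level `Λ`
by the `b_υ` together with their stem swaps, and extending the ascent path by `b_{max(ξ, υ)}`,
gives the lower bound: the ascent from a level `α < Λ` to `Λ` is inherited from the ascent to the
top of a condition above `α`. -/

namespace BNode

theorem ext' {s t : BNode.{u}} (h1 : s.1 = t.1)
    (h2 : ∀ x (hx : x < s.1) (hx' : x < t.1), s.2 ⟨x, hx⟩ = t.2 ⟨x, hx'⟩) : s = t := by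
  obtain ⟨a, f⟩ := s
  obtain ⟨b, g⟩ := t
  obtain rfl : a = b := h1
  obtain rfl : f = g := funext fun x => h2 x.1 x.2 x.2
  rfl

theorem le_refl (s : BNode.{u}) : BNode.le s s :=
  ⟨_root_.le_rfl, fun _ _ => rfl⟩

theorem le_trans {s t r : BNode.{u}} (h₁ : BNode.le s t) (h₂ : BNode.le t r) : BNode.le s r :=
  ⟨h₁.1.trans h₂.1, fun x hx => (h₁.2 x (x.2.trans_le h₁.1)).trans (h₂.2 _ hx)⟩

theorem eq_of_le_of_ht_eq {s t : BNode.{u}} (h : BNode.le s t) (he : s.1 = t.1) : s = t :=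
  ext' he fun x hx hx' => h.2 ⟨x, hx⟩ hx'

theorem apply_eq_of_le_or_le {s t : BNode.{u}} (h : BNode.le s t ∨ BNode.le t s) {x : Ordinal.{u}}
    (hs : x < s.1) (ht : x < t.1) : s.2 ⟨x, hs⟩ = t.2 ⟨x, ht⟩ :=
  h.elim (fun h => h.2 ⟨x, hs⟩ ht) fun h => (h.2 ⟨x, ht⟩ hs).symm

theorem restrict_le (t : BNode.{u}) (β : Ordinal.{u}) (h : β ≤ t.1) :
    BNode.le (t.restrict β h) t :=
  ⟨h, fun _ _ => rfl⟩

theorem restrict_eq_of_le {s t : BNode.{u}} (hst : BNode.le s t) {β : Ordinal.{u}}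
    (hβs : β ≤ s.1) (hβt : β ≤ t.1) : t.restrict β hβt = s.restrict β hβs :=
  ext' rfl fun x hx _ => (hst.2 ⟨x, hx.trans_le hβs⟩ (hx.trans_le hβt)).symm

theorem le_swap (s t : BNode.{u}) (h : s.1 ≤ t.1) : BNode.le s (swap s t h) :=
  ⟨h, fun x _ => by simp [swap, x.2]⟩

theorem swap_eq_of_ht_eq {s t : BNode.{u}} (h : s.1 ≤ t.1) (he : s.1 = t.1) : swap s t h = s :=
  (eq_of_le_of_ht_eq (le_swap s t h) he).symm

theorem swap_restrict_self (t : BNode.{u}) (β : Ordinal.{u}) (h : β ≤ t.1) :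
    swap (t.restrict β h) t h = t :=
  ext' rfl fun x _ _ => by dsimp only [swap, restrict]; split_ifs <;> rfl

theorem restrict_swap_of_le {s t : BNode.{u}} (h : s.1 ≤ t.1) {β : Ordinal.{u}}
    (hβ : β ≤ (swap s t h).1) (hβs : β ≤ s.1) :
    (swap s t h).restrict β hβ = s.restrict β hβs :=
  ext' rfl fun x hx _ => by simp [swap, restrict, hx.trans_le hβs]

theorem restrict_swap_of_ge {s t : BNode.{u}} (h : s.1 ≤ t.1) {β : Ordinal.{u}}
    (hβ : β ≤ (swap s t h).1) (hsβ : s.1 ≤ β) :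
    (swap s t h).restrict β hβ = swap s (t.restrict β hβ) hsβ :=
  rfl

theorem swap_swap_of_le {r s t : BNode.{u}} (hst : s.1 ≤ t.1) (hrs : r.1 ≤ s.1) :
    swap r (swap s t hst) (hrs.trans hst) = swap (swap r s hrs) t hst :=
  ext' rfl fun x _ _ => by
    dsimp only [swap]
    split_ifs with h₁ h₂ <;> first | rfl | exact absurd (h₁.trans_le hrs) h₂

theorem swap_swap_of_ge {r s t : BNode.{u}} (hst : s.1 ≤ t.1) (hsr : s.1 ≤ r.1) (hrt : r.1 ≤ t.1) :
    swap r (swap s t hst) hrt = swap r t hrt :=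
  ext' rfl fun x _ _ => by
    dsimp only [swap]
    split_ifs with h₁ h₂ <;> first | rfl | exact absurd (h₂.trans_le hsr) h₁

open Classical in
noncomputable def limit {ι : Type*} (b : ι → BNode.{u}) (Λ : Ordinal.{u}) : BNode.{u} :=
  ⟨Λ, fun x => if h : ∃ i, x.1 < (b i).1 then (b h.choose).2 ⟨x.1, h.choose_spec⟩ else false⟩

theorem le_limit {ι : Type*} {b : ι → BNode.{u}}
    (hb : ∀ i j, BNode.le (b i) (b j) ∨ BNode.le (b j) (b i))
    {Λ : Ordinal.{u}} {i : ι} (hi : (b i).1 ≤ Λ) : BNode.le (b i) (limit b Λ) := by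
  refine ⟨hi, fun x _ => ?_⟩
  have h : ∃ j, x.1 < (b j).1 := ⟨i, x.2⟩
  classical
  change _ = dite _ _ _
  rw [dif_pos h]
  exact apply_eq_of_le_or_le (hb _ _) _ _

end BNode

theorem RLe.refl {κ δ : Ordinal.{u}} (p : RCond.{u} κ δ) : RLe p p :=
  ⟨⟨le_rfl, Set.ext fun t => ⟨fun ht => ⟨ht, p.mem_ht t ht⟩, And.left⟩, fun _ _ _ _ => rfl⟩,
    rfl, fun _ _ _ => BNode.le_refl _⟩

theorem RLe.symm_of_top_eq {κ δ : Ordinal.{u}} {p q : RCond.{u} κ δ} (h : RLe p q)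
    (htop : p.top = q.top) : RLe q p := by
  obtain ⟨⟨-, hT, hf⟩, hξ, -⟩ := h
  have hT' : q.T = p.T := hT.trans (Set.sep_eq_self_iff_mem_true.2 fun t ht => htop ▸ p.mem_ht t ht)
  refine ⟨⟨htop.le, ?_, fun α hα υ hυ => (hf α (htop ▸ hα) υ hυ).symm⟩, hξ.symm, ?_⟩
  · rw [hT']
    exact (Set.sep_eq_self_iff_mem_true.2 fun t ht => p.mem_ht t ht).symm
  · intro υ _ hυ
    rw [htop, hf q.top le_rfl υ hυ]
    exact BNode.le_refl _

theorem nonempty_rCond {κ δ : Ordinal.{u}} (hκ : 1 < κ) (hδ : 0 < δ) :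
    Nonempty (RCond.{u} κ δ) := by
  have h1 : ∀ {α : Ordinal.{u}}, α < 0 + 1 ↔ α = 0 := by
    rw [zero_add]; exact Order.lt_one_iff
  refine ⟨⟨⟨0, by rwa [zero_add], {t | t.1 = 0}, fun t ht => h1.2 ht, fun α hα => ?_,
    fun t ht β hβ => le_antisymm (ht ▸ hβ) (zero_le (a := β)), fun t ht α hα hα' => ?_,
    fun _ _ _ _ _ t ht _ _ => ht, fun _ _ => ⟨0, fun _ => false⟩, fun α hα _ _ => ?_,
    fun α β hαβ hβ => ?_⟩, 0, hδ⟩⟩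
  · exact ⟨⟨0, fun _ => false⟩, rfl, (h1.1 hα).symm⟩
  · obtain rfl := h1.1 hα'
    exact ⟨t, ht, ht, BNode.le_refl t⟩
  · exact ⟨rfl, (h1.1 hα).symm⟩
  · exact absurd (h1.1 hβ ▸ hαβ) (not_lt_zero (a := α))

def RDescending {κ δ : Ordinal.{u}} (γ : Ordinal.{u}) (F : Ordinal.{u} → RCond.{u} κ δ) : Prop :=
  ∀ a b : Ordinal.{u}, a < b → b < γ → RLe (F b) (F a)

namespace RDescending

variable {κ δ γ : Ordinal.{u}} {F : Ordinal.{u} → RCond.{u} κ δ} (hF : RDescending γ F)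
include hF

theorem rle {a b : Ordinal.{u}} (hab : a ≤ b) (hb : b < γ) : RLe (F b) (F a) :=
  hab.lt_or_eq.elim (fun h => hF a b h hb) fun h => h ▸ RLe.refl _

theorem top_mono {a b : Ordinal.{u}} (hab : a ≤ b) (hb : b < γ) : (F a).top ≤ (F b).top :=
  (hF.rle hab hb).1.1

theorem T_subset {a b : Ordinal.{u}} (hab : a ≤ b) (hb : b < γ) : (F a).T ⊆ (F b).T := by
  rw [(hF.rle hab hb).1.2.1]
  exact fun _ ht => ht.1

theorem ξ_eq {a : Ordinal.{u}} (ha : a < γ) : (F a).ξ = (F 0).ξ :=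
  (hF.rle (zero_le (a := a)) ha).2.1

theorem f_eq {a b α υ : Ordinal.{u}} (ha : a < γ) (hb : b < γ) (hαa : α ≤ (F a).top)
    (hαb : α ≤ (F b).top) (hυ : υ < δ) : (F a).f α υ = (F b).f α υ := by
  rcases le_total a b with h | h
  · exact ((hF.rle h hb).1.2.2 α hαa υ hυ).symm
  · exact (hF.rle h ha).1.2.2 α hαb υ hυ

theorem topNode_le {a b υ : Ordinal.{u}} (hab : a ≤ b) (hb : b < γ) (hυ : (F 0).ξ ≤ υ)
    (hυδ : υ < δ) : BNode.le ((F a).f (F a).top υ) ((F b).f (F b).top υ) :=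
  (hF.rle hab hb).2.2 υ (hF.ξ_eq hb ▸ hυ) hυδ

theorem rle_of_top_max {b : Ordinal.{u}} (hb : b < γ) (hmax : ∀ a < γ, (F a).top ≤ (F b).top) :
    ∀ a < γ, RLe (F b) (F a) := by
  intro a ha
  rcases le_total a b with h | h
  · exact hF.rle h hb
  · exact (hF.rle h ha).symm_of_top_eq ((hF.top_mono h ha).antisymm' (hmax a ha))

end RDescending

section Limit

variable {κ δ : Ordinal.{u}} (γ : Ordinal.{u}) (F : Ordinal.{u} → RCond.{u} κ δ)

noncomputable def chainSup : Ordinal.{u} := ⨆ a : Set.Iio γ, (F a).top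

def chainTree : Set BNode.{u} := {t | ∃ a < γ, t ∈ (F a).T}

noncomputable def chainBranch (υ : Ordinal.{u}) : BNode.{u} :=
  BNode.limit (fun a : Set.Iio γ => (F a).f (F a).top υ) (chainSup γ F)

/-- Closing the branches under stem swaps keeps the sealed tree homogeneous. -/
def chainTop : Set BNode.{u} :=
  {t | ∃ s ∈ chainTree γ F, ∃ υ, (F 0).ξ ≤ υ ∧ υ < δ ∧
    ∃ h, t = BNode.swap s (chainBranch γ F υ) h}

def limitTree : Set BNode.{u} := chainTree γ F ∪ chainTop γ F

open Classical in
noncomputable def chainPath (α υ : Ordinal.{u}) : BNode.{u} :=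
  if h : ∃ a < γ, α ≤ (F a).top then (F h.choose).f α υ
  else chainBranch γ F (max (F 0).ξ υ)

variable {γ F}

theorem le_chainSup {a : Ordinal.{u}} (ha : a < γ) : (F a).top ≤ chainSup γ F :=
  Ordinal.le_iSup (fun a : Set.Iio γ => (F a).top) ⟨a, ha⟩

theorem lt_chainSup_iff {x : Ordinal.{u}} : x < chainSup γ F ↔ ∃ a < γ, x < (F a).top := by
  simp [chainSup, Ordinal.lt_iSup_iff]

theorem chainSup_add_one_lt {κ : Cardinal.{u}} {δ γ : Ordinal.{u}} (hκ : κ.IsRegular)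
    (hγ : γ < κ.ord) (F : Ordinal.{u} → RCond.{u} κ.ord δ) : chainSup γ F + 1 < κ.ord := by
  have hγκ : Cardinal.lift.{u} (Cardinal.mk (Set.Iio γ)) < (Ordinal.lift.{u + 1} κ.ord).cof := by
    rw [← Ordinal.lift_cof, hκ.cof_ord, Cardinal.mk_Iio_ordinal, Cardinal.lift_lift,
      Cardinal.lift_lt]
    exact Cardinal.lt_ord.1 hγ
  refine (Cardinal.isSuccLimit_ord hκ.aleph0_le).add_one_lt ?_
  exact Ordinal.lift_iSup_lt_of_lt_cof hγκ fun a => (lt_add_one _).trans (F a).top_lt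

theorem ht_of_mem_chainTop {t : BNode.{u}} (ht : t ∈ chainTop γ F) : t.1 = chainSup γ F := by
  obtain ⟨s, -, υ, -, -, h, rfl⟩ := ht
  rfl

section Unbounded

variable (hunb : ∀ b < γ, ∃ a < γ, (F b).top < (F a).top)
include hunb

theorem top_lt_chainSup {a : Ordinal.{u}} (ha : a < γ) : (F a).top < chainSup γ F := by
  obtain ⟨b, hb, hab⟩ := hunb a ha
  exact hab.trans_le (le_chainSup hb)

theorem ht_lt_chainSup {t : BNode.{u}} (ht : t ∈ chainTree γ F) : t.1 < chainSup γ F := by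
  obtain ⟨a, ha, hta⟩ := ht
  exact (Order.lt_add_one_iff.1 ((F a).mem_ht t hta)).trans_lt (top_lt_chainSup hunb ha)

theorem ht_lt_of_mem_limitTree {t : BNode.{u}} (ht : t ∈ limitTree γ F) :
    t.1 < chainSup γ F + 1 := by
  rcases ht with ht | ht
  · exact (ht_lt_chainSup hunb ht).trans (lt_add_one _)
  · exact ht_of_mem_chainTop ht ▸ lt_add_one _

theorem chainPath_chainSup (υ : Ordinal.{u}) :
    chainPath γ F (chainSup γ F) υ = chainBranch γ F (max (F 0).ξ υ) := by
  rw [chainPath, dif_neg]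
  rintro ⟨a, ha, h⟩
  exact (top_lt_chainSup hunb ha).not_ge h

end Unbounded

end Limit

namespace RDescending

variable {κ δ γ : Ordinal.{u}} {F : Ordinal.{u} → RCond.{u} κ δ} (hF : RDescending γ F)
include hF

theorem swap_mem_chainTree {s t : BNode.{u}} (hs : s ∈ chainTree γ F) (ht : t ∈ chainTree γ F)
    (h : s.1 ≤ t.1) : BNode.swap s t h ∈ chainTree γ F := by
  obtain ⟨a, ha, hsa⟩ := hs
  obtain ⟨b, hb, htb⟩ := ht
  have hc : max a b < γ := max_lt ha hb
  have hs' := hF.T_subset (le_max_left a b) hc hsa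
  have ht' := hF.T_subset (le_max_right a b) hc htb
  exact ⟨max a b, hc, (F _).homog _ ((F _).downward_closed t ht' s.1 h) s hs' rfl t ht'
    (BNode.restrict_le t _ h) h⟩

section Branch

variable {υ : Ordinal.{u}} (hυ : (F 0).ξ ≤ υ) (hυδ : υ < δ)
include hυ hυδ

theorem topNode_le_chainBranch {a : Ordinal.{u}} (ha : a < γ) :
    BNode.le ((F a).f (F a).top υ) (chainBranch γ F υ) := by
  refine BNode.le_limit (fun i j : Set.Iio γ => (le_total i j).imp (hF.topNode_le · j.2 hυ hυδ)
    (hF.topNode_le · i.2 hυ hυδ)) (i := ⟨a, ha⟩) ?_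
  exact ((F a).f_mem _ (lt_add_one _) υ hυδ).2.trans_le (le_chainSup ha)

theorem restrict_chainBranch_mem {β : Ordinal.{u}} (hβ : β < chainSup γ F)
    (h : β ≤ (chainBranch γ F υ).1) : (chainBranch γ F υ).restrict β h ∈ chainTree γ F := by
  obtain ⟨a, ha, hβa⟩ := lt_chainSup_iff.1 hβ
  have hmem := (F a).f_mem _ (lt_add_one _) υ hυδ
  have hβ' : β ≤ ((F a).f (F a).top υ).1 := hβa.le.trans hmem.2.ge
  rw [BNode.restrict_eq_of_le (hF.topNode_le_chainBranch hυ hυδ ha) hβ']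
  exact ⟨a, ha, (F a).downward_closed _ hmem.1 β hβ'⟩

theorem chainBranch_mem_chainTop (hunb : ∀ b < γ, ∃ a < γ, (F b).top < (F a).top)
    (hγ : 0 < γ) : chainBranch γ F υ ∈ chainTop γ F := by
  have h0 : 0 < chainSup γ F := (zero_le (a := (F 0).top)).trans_lt (top_lt_chainSup hunb hγ)
  exact ⟨_, hF.restrict_chainBranch_mem hυ hυδ h0 h0.le, υ, hυ, hυδ, _,
    (BNode.swap_restrict_self _ _ _).symm⟩

end Branch

theorem restrict_mem_chainTree_of_mem_chainTop {t : BNode.{u}} (ht : t ∈ chainTop γ F)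
    {β : Ordinal.{u}} (hβ : β < chainSup γ F) (h : β ≤ t.1) : t.restrict β h ∈ chainTree γ F := by
  obtain ⟨s, hs, υ, hυ, hυδ, hsg, rfl⟩ := ht
  rcases le_total β s.1 with hβs | hsβ
  · rw [BNode.restrict_swap_of_le hsg h hβs]
    obtain ⟨a, ha, hsa⟩ := hs
    exact ⟨a, ha, (F a).downward_closed s hsa β hβs⟩
  · rw [BNode.restrict_swap_of_ge hsg h hsβ]
    exact hF.swap_mem_chainTree hs (hF.restrict_chainBranch_mem hυ hυδ hβ h) hsβ

theorem restrict_mem_limitTree {t : BNode.{u}} (ht : t ∈ limitTree γ F) (β : Ordinal.{u})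
    (h : β ≤ t.1) : t.restrict β h ∈ limitTree γ F := by
  rcases ht with ⟨a, ha, hta⟩ | ht
  · exact Or.inl ⟨a, ha, (F a).downward_closed t hta β h⟩
  · rcases h.lt_or_eq with hβ | rfl
    · exact Or.inl (hF.restrict_mem_chainTree_of_mem_chainTop ht (ht_of_mem_chainTop ht ▸ hβ) h)
    · rw [BNode.eq_of_le_of_ht_eq (BNode.restrict_le t _ h) rfl]
      exact Or.inr ht

theorem chainPath_eq {a α υ : Ordinal.{u}} (ha : a < γ) (hα : α ≤ (F a).top) (hυ : υ < δ) :
    chainPath γ F α υ = (F a).f α υ := by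
  have h : ∃ a < γ, α ≤ (F a).top := ⟨a, ha, hα⟩
  rw [chainPath, dif_pos h]
  exact hF.f_eq h.choose_spec.1 ha h.choose_spec.2 hα hυ

section Unbounded

variable (hunb : ∀ b < γ, ∃ a < γ, (F b).top < (F a).top)
include hunb

theorem exists_mem_limitTree_ht (hγ : 0 < γ) {α : Ordinal.{u}} (hα : α < chainSup γ F + 1) :
    ∃ t ∈ limitTree γ F, BNode.ht t = α := by
  rcases (Order.lt_add_one_iff.1 hα).lt_or_eq with hα | rfl
  · obtain ⟨a, ha, hαa⟩ := lt_chainSup_iff.1 hα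
    obtain ⟨t, ht, hth⟩ := (F a).levels_nonempty α (hαa.trans (lt_add_one _))
    exact ⟨t, Or.inl ⟨a, ha, ht⟩, hth⟩
  · exact ⟨_, Or.inr (hF.chainBranch_mem_chainTop le_rfl (F 0).ξ_lt hunb hγ), rfl⟩

theorem exists_le_mem_limitTree {t : BNode.{u}} (ht : t ∈ limitTree γ F) {α : Ordinal.{u}}
    (hα : t.1 ≤ α) (hα' : α < chainSup γ F + 1) :
    ∃ s ∈ limitTree γ F, BNode.ht s = α ∧ BNode.le t s := by
  rcases ht with ht | ht
  · rcases (Order.lt_add_one_iff.1 hα').lt_or_eq with hα' | rfl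
    · obtain ⟨a, ha, hta⟩ := ht
      obtain ⟨b, hb, hαb⟩ := lt_chainSup_iff.1 hα'
      have hc := max_lt ha hb
      have hαc := hαb.trans_le (hF.top_mono (le_max_right a b) hc)
      obtain ⟨s, hs, hsα, hts⟩ := (F (max a b)).normal t (hF.T_subset (le_max_left a b) hc hta)
        α hα (hαc.trans (lt_add_one _))
      exact ⟨s, Or.inl ⟨_, hc, hs⟩, hsα, hts⟩
    · have hts := (ht_lt_chainSup hunb ht).le
      exact ⟨_, Or.inr ⟨t, ht, (F 0).ξ, le_rfl, (F 0).ξ_lt, hts, rfl⟩, rfl, BNode.le_swap t _ hts⟩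
  · refine ⟨t, Or.inr ht, hα.antisymm ?_, BNode.le_refl t⟩
    exact (Order.lt_add_one_iff.1 hα').trans (ht_of_mem_chainTop ht).ge

theorem swap_mem_limitTree {s t : BNode.{u}} (hs : s ∈ limitTree γ F) (ht : t ∈ limitTree γ F)
    (h : s.1 ≤ t.1) : BNode.swap s t h ∈ limitTree γ F := by
  rcases hs with hs | hs
  · rcases ht with ht | ⟨r, hr, υ, hυ, hυδ, hrg, rfl⟩
    · exact Or.inl (hF.swap_mem_chainTree hs ht h)
    · refine Or.inr ?_
      rcases le_total s.1 r.1 with hsr | hrs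
      · exact ⟨_, hF.swap_mem_chainTree hs hr hsr, υ, hυ, hυδ, hrg, BNode.swap_swap_of_le hrg hsr⟩
      · exact ⟨s, hs, υ, hυ, hυδ, h, BNode.swap_swap_of_ge hrg hrs h⟩
  · have hts : t.1 ≤ s.1 :=
      ht_of_mem_chainTop hs ▸ Order.lt_add_one_iff.1 (ht_lt_of_mem_limitTree hunb ht)
    rw [BNode.swap_eq_of_ht_eq h (h.antisymm hts)]
    exact Or.inr hs

theorem chainPath_mem (hγ : 0 < γ) {α υ : Ordinal.{u}} (hα : α < chainSup γ F + 1) (hυ : υ < δ) :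
    chainPath γ F α υ ∈ limitTree γ F ∧ BNode.ht (chainPath γ F α υ) = α := by
  rcases (Order.lt_add_one_iff.1 hα).lt_or_eq with hα | rfl
  · obtain ⟨a, ha, hαa⟩ := lt_chainSup_iff.1 hα
    obtain ⟨hm, hht⟩ := (F a).f_mem α (hαa.trans (lt_add_one _)) υ hυ
    rw [hF.chainPath_eq ha hαa.le hυ]
    exact ⟨Or.inl ⟨a, ha, hm⟩, hht⟩
  · rw [chainPath_chainSup hunb]
    exact ⟨Or.inr (hF.chainBranch_mem_chainTop (le_max_left _ _) (max_lt (F 0).ξ_lt hυ) hunb hγ),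
      rfl⟩

theorem chainPath_ascent {α β : Ordinal.{u}} (hαβ : α < β) (hβ : β < chainSup γ F + 1) :
    ∃ ξ < δ, ∀ υ, ξ ≤ υ → υ < δ → BNode.slt (chainPath γ F α υ) (chainPath γ F β υ) := by
  rcases (Order.lt_add_one_iff.1 hβ).lt_or_eq with hβ | rfl
  · obtain ⟨a, ha, hβa⟩ := lt_chainSup_iff.1 hβ
    obtain ⟨ξ, hξ, hasc⟩ := (F a).f_ascent α β hαβ (hβa.trans (lt_add_one _))
    refine ⟨ξ, hξ, fun υ hυ hυδ => ?_⟩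
    rw [hF.chainPath_eq ha (hαβ.trans hβa).le hυδ, hF.chainPath_eq ha hβa.le hυδ]
    exact hasc υ hυ hυδ
  · obtain ⟨a, ha, hαa⟩ := lt_chainSup_iff.1 hαβ
    obtain ⟨ξ, hξ, hasc⟩ := (F a).f_ascent α (F a).top hαa (lt_add_one _)
    refine ⟨max (F 0).ξ ξ, max_lt (F 0).ξ_lt hξ, fun υ hυ hυδ => ?_⟩
    have hυ₀ : (F 0).ξ ≤ υ := (le_max_left _ _).trans hυ
    rw [hF.chainPath_eq ha hαa.le hυδ, chainPath_chainSup hunb, max_eq_right hυ₀]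
    refine ⟨BNode.le_trans (hasc υ ((le_max_right _ _).trans hυ) hυδ).1
      (hF.topNode_le_chainBranch hυ₀ hυδ ha), ?_⟩
    change BNode.ht ((F a).f α υ) < chainSup γ F
    rwa [((F a).f_mem α (hαa.trans (lt_add_one _)) υ hυδ).2]

noncomputable def limit (hγ : 0 < γ) (hΛ : chainSup γ F + 1 < κ) : RCond.{u} κ δ where
  top := chainSup γ F
  top_lt := hΛ
  T := limitTree γ F
  mem_ht _ ht := ht_lt_of_mem_limitTree hunb ht
  levels_nonempty _ hα := hF.exists_mem_limitTree_ht hunb hγ hα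
  downward_closed _ ht := hF.restrict_mem_limitTree ht
  normal _ ht _ hα hα' := hF.exists_le_mem_limitTree hunb ht hα hα'
  homog _ _ _ hs₁ _ _ ht _ h := hF.swap_mem_limitTree hunb hs₁ ht h
  f := chainPath γ F
  f_mem _ hα _ hυ := hF.chainPath_mem hunb hγ hα hυ
  f_ascent _ _ hαβ hβ := hF.chainPath_ascent hunb hαβ hβ
  ξ := (F 0).ξ
  ξ_lt := (F 0).ξ_lt

theorem limit_rle (hγ : 0 < γ) (hΛ : chainSup γ F + 1 < κ) {a : Ordinal.{u}} (ha : a < γ) :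
    RLe (hF.limit hunb hγ hΛ) (F a) := by
  refine ⟨⟨(top_lt_chainSup hunb ha).le, ?_, fun α hα υ hυ => hF.chainPath_eq ha hα hυ⟩,
    (hF.ξ_eq ha).symm, fun υ hυ hυδ => ?_⟩
  · ext t
    refine ⟨fun ht => ⟨Or.inl ⟨a, ha, ht⟩, (F a).mem_ht t ht⟩, ?_⟩
    rintro ⟨⟨b, hb, htb⟩ | htop, hta⟩
    · have hc := max_lt ha hb
      rw [(hF.rle (le_max_left a b) hc).1.2.1]
      exact ⟨hF.T_subset (le_max_right a b) hc htb, hta⟩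
    · have : chainSup γ F < (F a).top + 1 := ht_of_mem_chainTop htop ▸ hta
      exact absurd (Order.lt_add_one_iff.1 this) (top_lt_chainSup hunb ha).not_ge
  · change (F 0).ξ ≤ υ at hυ
    change BNode.le _ (chainPath γ F (chainSup γ F) υ)
    rw [chainPath_chainSup hunb, max_eq_right hυ]
    exact hF.topNode_le_chainBranch hυ hυδ ha

end Unbounded

end RDescending

theorem R0_lt_kappa_closed_general (κ δ : Cardinal.{u})
    (h2M : Is2Mahlo κ) (hδ : δ.IsRegular) :
    ∀ γ < κ.ord, ∀ F : Ordinal.{u} → RCond.{u} κ.ord δ.ord,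
      (∀ a b : Ordinal.{u}, a < b → b < γ → RLe (F b) (F a)) →
      ∃ r : RCond.{u} κ.ord δ.ord, ∀ a < γ, RLe r (F a) := by
  intro γ hγ F hF
  replace hF : RDescending γ F := hF
  have hκ : κ.IsRegular := h2M.1.1.isRegular
  rcases eq_or_ne γ 0 with rfl | hγ0
  · have h1κ : (1 : Ordinal.{u}) < κ.ord :=
      Cardinal.lt_ord.2 (by simpa using Cardinal.one_lt_aleph0.trans_le hκ.aleph0_le)
    obtain ⟨r⟩ := nonempty_rCond h1κ hδ.ord_pos
    exact ⟨r, fun a ha => absurd ha (not_lt_zero (a := a))⟩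
  by_cases hmax : ∃ b < γ, ∀ a < γ, (F a).top ≤ (F b).top
  · obtain ⟨b, hb, hmax⟩ := hmax
    exact ⟨F b, hF.rle_of_top_max hb hmax⟩
  · push Not at hmax
    exact ⟨_, fun a => hF.limit_rle hmax (pos_iff_ne_zero.2 hγ0) (chainSup_add_one_lt hκ hγ F)⟩

/-- The poset `R₀` is `<κ`-closed (`κ` 2-Mahlo, `δ < κ` regular): every descending
sequence of conditions of length `< κ` has a lower bound. -/
theorem R0_lt_kappa_closed (κ δ : Cardinal.{u})
    (h2M : Is2Mahlo κ) (hδ : δ.IsRegular) (hδκ : δ < κ) :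
    ∀ γ < κ.ord, ∀ F : Ordinal.{u} → RCond.{u} κ.ord δ.ord,
      (∀ a b : Ordinal.{u}, a < b → b < γ → RLe (F b) (F a)) →
      ∃ r : RCond.{u} κ.ord δ.ord, ∀ a < γ, RLe r (F a) :=
  R0_lt_kappa_closed_general κ δ h2M hδ
end
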